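/- arXiv:1702.08119 — 2 statements merged into one kernel-verified Lean document; each statement's English description precedes it below -/
import Mathlib

section
/- A map of forests φ: F → F' that is both a face map (injective on underlying sets) and a degeneracy (surjective on underlying sets, and ε ≰ φ(l) for every leaf l of F) is an isomorphism of broad posets. -/
universe u

namespace BroadPaper

/-- A broad relation on `X`: a relation between finite unordered tuples
(multisets) over `X` and elements of `X`. -/
abbrev Rel (X : Type u) : Type u := Multiset X → X → Prop

variable {X : Type u} {Y : Type u} {A : Type u} {B : Type u} {Z : Type u}

/-- Broad transitivity: if `f₁ ⋯ fₙ ≤ e` and `g̲ᵢ ≤ fᵢ` then `g̲₁ ⋯ g̲ₙ ≤ e`,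
encoded via a multiset of pairs `(g̲ᵢ, fᵢ)`. -/
def BTrans (r : Rel X) : Prop :=
  ∀ (p : Multiset (Multiset X × X)) (e : X),
    r (p.map Prod.snd) e → (∀ q ∈ p, r q.1 q.2) → r ((p.map Prod.fst).sum) e

/-- A pre-broad poset: reflexivity plus broad transitivity. -/
def IsPreBroad (r : Rel X) : Prop := (∀ e : X, r {e} e) ∧ BTrans r

/-- A (commutative) broad poset: a pre-broad poset satisfying antisymmetry. -/
def IsBroad (r : Rel X) : Prop :=
  IsPreBroad r ∧ ∀ e f : X, r {e} f → r {f} e → e = f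

/-- Simplicity: letters in any broad relation are pairwise distinct. -/
def Simple (r : Rel X) : Prop := ∀ fs e, r fs e → fs.Nodup

/-- The descendant relation `f ≤_d e`. -/
def descends (r : Rel X) (f e : X) : Prop := ∃ fs, r fs e ∧ f ∈ fs

def Comparable (r : Rel X) (f g : X) : Prop := descends r f g ∨ descends r g f

def Incomp (r : Rel X) (f g : X) : Prop := ¬ descends r f g ∧ ¬ descends r g f

/-- Blockwise extension of a broad relation to a relation between tuples:
`fs ≤ es` iff `fs = f̲₁ ⋯ f̲ₖ`, `es = e₁ ⋯ eₖ` with `f̲ᵢ ≤ eᵢ`. -/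
def tupleLE (r : Rel X) (fs es : Multiset X) : Prop :=
  ∃ p : Multiset (Multiset X × X),
    p.map Prod.snd = es ∧ (p.map Prod.fst).sum = fs ∧ ∀ q ∈ p, r q.1 q.2

/-- A leaf: no tuple strictly below `e`. -/
def IsLeaf (r : Rel X) (e : X) : Prop := ¬ ∃ fs, r fs e ∧ fs ≠ ({e} : Multiset X)

/-- `fs` is the maximum tuple strictly below `e` (written `e^↑`).
If `fs ≠ 0`, `e` is a node; if `fs = 0`, `e` is a stump. -/
def upTuple (r : Rel X) (e : X) (fs : Multiset X) : Prop :=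
  (r fs e ∧ fs ≠ ({e} : Multiset X)) ∧
    ∀ gs, r gs e → gs ≠ ({e} : Multiset X) → tupleLE r gs fs

def IsStump (r : Rel X) (e : X) : Prop := upTuple r e 0

/-- A dendroidally ordered set (tree): a finite simple broad poset in which
every element is a leaf, node or stump, with a `≤_d`-maximum (root). -/
def IsTree (r : Rel X) : Prop :=
  IsBroad r ∧ Finite X ∧ Simple r ∧
    (∀ e : X, IsLeaf r e ∨ ∃ fs, upTuple r e fs) ∧
    ∃ rt : X, ∀ e, descends r e rt

def IsMaxEl (r : Rel X) (e : X) : Prop := ∀ s, descends r e s → s = e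

/-- A forestially ordered set (forest): each element has a unique
`≤_d`-maximal element above it. -/
def IsForest (r : Rel X) : Prop :=
  IsBroad r ∧ Finite X ∧ Simple r ∧
    (∀ e : X, IsLeaf r e ∨ ∃ fs, upTuple r e fs) ∧
    ∀ e : X, ∃! rt : X, IsMaxEl r rt ∧ descends r e rt

/-- A map of broad posets: preserves broad relations (letterwise on tuples). -/
def BroadHom (r : Rel X) (r' : Rel Y) (φ : X → Y) : Prop :=
  ∀ fs e, r fs e → r' (fs.map φ) (φ e)

/-- `rs` is the root tuple: the tuple of `≤_d`-maximal elements (no repeats). -/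
def IsRootTuple (r : Rel X) (rs : Multiset X) : Prop :=
  rs.Nodup ∧ ∀ x, x ∈ rs ↔ IsMaxEl r x

/-- Independent map of forests: `φ(r̲_F)·e̲ ≤ r̲_{F'}` for some tuple `e̲`. -/
def Independent (r : Rel X) (r' : Rel Y) (φ : X → Y) : Prop :=
  ∃ (rs : Multiset X) (rs' : Multiset Y) (es : Multiset Y),
    IsRootTuple r rs ∧ IsRootTuple r' rs' ∧ tupleLE r' (rs.map φ + es) rs'

/-- The (pre-)broad relation generated by a set of generating relations:
closure under reflexivity and broad transitivity. -/
inductive GenRel (gen : Rel X) : Rel X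
  | of : ∀ fs e, gen fs e → GenRel gen fs e
  | refl : ∀ e, GenRel gen {e} e
  | btrans : ∀ (p : Multiset (Multiset X × X)) (e : X),
      GenRel gen (p.map Prod.snd) e → (∀ q ∈ p, GenRel gen q.1 q.2) →
      GenRel gen ((p.map Prod.fst).sum) e

/-- Generators of the tensor product `S ⊗ T`: relations `s̲ × t ≤ (s,t)` and
`s × t̲ ≤ (s,t)`. -/
def tensorGen (rS : Rel A) (rT : Rel B) : Rel (A × B) := fun xs x =>
  (∃ as, rS as x.1 ∧ xs = as.map fun a => (a, x.2)) ∨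
  (∃ bs, rT bs x.2 ∧ xs = bs.map fun b => (x.1, b))

/-- The tensor product broad relation on `A × B`. -/
def tensorRel (rS : Rel A) (rT : Rel B) : Rel (A × B) := GenRel (tensorGen rS rT)

/-- Product of tuples: all pairs from `as` and `bs`. -/
def mprod (as : Multiset A) (bs : Multiset B) : Multiset (A × B) :=
  as.bind fun a => bs.map fun b => (a, b)

end BroadPaper

/-!
The inverse `ψ` of the bijection `φ` has to be shown to be a broad map. By independence,
`φ` sends roots to roots. Then, by induction downward from the roots, `φ` reflects `≤_d`:
if `φ z ≤_d φ x` and `x` is a letter of the up-tuple `ks` of its parent `c`, then `z ≤_d c`,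
so `z` lies under some `f ∈ ks`; were `f ≠ x`, then `φ z` would be a common descendant of the
distinct letters `φ f` and `φ x` of `φ ks ≤ φ c`, which simplicity forbids. Reflection makes
`φ (x^↑)` a tuple below `(φ x)^↑` covering all its letters, so the two agree (the leaf condition
rules out a leaf going to a stump). Since every relation of a forest is generated from the
up-tuples by broad transitivity, `ψ` preserves all relations.
-/

namespace BroadPaper

variable {X Y : Type u}

lemma sum_map_fst_eq_map_snd {p : Multiset (Multiset X × X)}
    (h : ∀ q ∈ p, q.1 = {q.2}) : (p.map Prod.fst).sum = p.map Prod.snd := by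
  rw [Multiset.map_congr rfl h, ← Multiset.sum_map_singleton (p.map Prod.snd), Multiset.map_map]
  rfl

lemma tupleLE.map {r : Rel X} {r' : Rel Y} {φ : X → Y} {gs fs : Multiset X}
    (h : tupleLE r gs fs) (hφ : ∀ bs f, f ∈ fs → r bs f → r' (bs.map φ) (φ f)) :
    tupleLE r' (gs.map φ) (fs.map φ) := by
  obtain ⟨p, rfl, rfl, hp⟩ := h
  refine ⟨p.map fun q => (q.1.map φ, φ q.2), by simp [Multiset.map_map], ?_, ?_⟩
  · change _ = Multiset.map φ (Multiset.join _)
    rw [Multiset.map_join, Multiset.map_map, Multiset.map_map]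
    rfl
  · simp only [Multiset.mem_map]
    rintro _ ⟨q, hq, rfl⟩
    exact hφ q.1 q.2 (Multiset.mem_map_of_mem _ hq) (hp q hq)

lemma BroadHom.map_descends {r : Rel X} {r' : Rel Y} {φ : X → Y} (hφ : BroadHom r r' φ)
    {f e : X} (h : descends r f e) : descends r' (φ f) (φ e) := by
  obtain ⟨fs, hfs, hf⟩ := h
  exact ⟨fs.map φ, hφ _ _ hfs, Multiset.mem_map_of_mem _ hf⟩

section BroadPoset

variable {r : Rel X}

lemma IsPreBroad.rel_of_tupleLE (hpre : IsPreBroad r) {gs fs : Multiset X} {e : X}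
    (h : r fs e) (hle : tupleLE r gs fs) : r gs e := by
  obtain ⟨p, rfl, rfl, hp⟩ := hle
  exact hpre.2 p e h hp

lemma IsPreBroad.rel_erase_add [DecidableEq X] (hpre : IsPreBroad r) {fs gs : Multiset X}
    {e f : X} (h : r fs e) (hf : f ∈ fs) (hg : r gs f) : r (fs.erase f + gs) e := by
  refine hpre.rel_of_tupleLE h ⟨(gs, f) ::ₘ (fs.erase f).map fun z => ({z}, z), ?_, ?_, ?_⟩
  · simp [Multiset.cons_erase hf]
  · simp [Multiset.sum_map_singleton, add_comm]
  · simpa using ⟨hg, fun z _ => hpre.1 z⟩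

lemma descends_trans (hpre : IsPreBroad r) {f g e : X} (hfg : descends r f g)
    (hge : descends r g e) : descends r f e := by
  classical
  obtain ⟨fs, hfs, hf⟩ := hfg
  obtain ⟨gs, hgs, hg⟩ := hge
  exact ⟨gs.erase g + fs, hpre.rel_erase_add hgs hg hfs, Multiset.mem_add.2 (Or.inr hf)⟩

lemma eq_singleton_of_self_mem (hpre : IsPreBroad r) (hsimp : Simple r) {ks : Multiset X}
    {e : X} (h : r ks e) (he : e ∈ ks) : ks = {e} := by
  classical
  have hdisj := Multiset.disjoint_of_nodup_add (hsimp _ _ (hpre.rel_erase_add h he h))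
  have herase : ks.erase e = 0 := Multiset.eq_zero_of_forall_notMem fun k hk =>
    Multiset.disjoint_left.1 hdisj hk (Multiset.mem_of_mem_erase hk)
  rw [← Multiset.cons_erase he, herase]
  rfl

lemma not_descends_of_mem (hpre : IsPreBroad r) (hsimp : Simple r) {bs : Multiset X}
    {e a b : X} (h : r bs e) (ha : a ∈ bs) (hb : b ∈ bs) (hab : a ≠ b) : ¬ descends r a b := by
  classical
  rintro ⟨gs, hgs, hags⟩
  have hnd := hsimp _ _ (hpre.rel_erase_add h hb hgs)
  exact Multiset.disjoint_left.1 (Multiset.disjoint_of_nodup_add hnd)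
    ((Multiset.mem_erase_of_ne hab).2 ha) hags

lemma not_descends_of_descends_of_mem (hpre : IsPreBroad r) (hsimp : Simple r)
    {bs : Multiset X} {e f₁ f₂ z : X} (h : r bs e) (h₁ : f₁ ∈ bs) (h₂ : f₂ ∈ bs)
    (hne : f₁ ≠ f₂) (hz₁ : descends r z f₁) : ¬ descends r z f₂ := by
  classical
  obtain ⟨gs, hgs, hzgs⟩ := hz₁
  have hsub := hpre.rel_erase_add h h₁ hgs
  have hf₂ : f₂ ∈ bs.erase f₁ := (Multiset.mem_erase_of_ne hne.symm).2 h₂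
  by_cases hzf : z = f₂
  · subst hzf
    exact absurd hzgs
      (Multiset.disjoint_left.1 (Multiset.disjoint_of_nodup_add (hsimp _ _ hsub)) hf₂)
  · exact not_descends_of_mem hpre hsimp hsub (Multiset.mem_add.2 (Or.inr hzgs))
      (Multiset.mem_add.2 (Or.inl hf₂)) hzf

lemma descends_antisymm (hbr : IsBroad r) (hsimp : Simple r) {f e : X}
    (hfe : descends r f e) (hef : descends r e f) : f = e := by
  classical
  obtain ⟨fs, hfs, hf⟩ := hfe
  obtain ⟨gs, hgs, he⟩ := hef
  have hsub : fs.erase f + gs = {e} := eq_singleton_of_self_mem hbr.1 hsimp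
    (hbr.1.rel_erase_add hfs hf hgs) (Multiset.mem_add.2 (Or.inr he))
  have hcard := congrArg Multiset.card hsub
  have hgs_pos : 0 < Multiset.card gs := Multiset.card_pos_iff_exists_mem.2 ⟨e, he⟩
  simp only [Multiset.card_add, Multiset.card_singleton] at hcard
  have herase : fs.erase f = 0 := Multiset.card_eq_zero.1 (by omega)
  rw [herase, zero_add] at hsub
  rw [← Multiset.cons_erase hf, herase] at hfs
  exact (hbr.2 e f (hsub ▸ hgs) hfs).symm

def StrictlyDescends (r : Rel X) (f e : X) : Prop := descends r f e ∧ f ≠ e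

lemma StrictlyDescends.trans (hbr : IsBroad r) (hsimp : Simple r) {f g e : X}
    (hfg : StrictlyDescends r f g) (hge : StrictlyDescends r g e) : StrictlyDescends r f e :=
  ⟨descends_trans hbr.1 hfg.1 hge.1, fun hfe =>
    hge.2 (descends_antisymm hbr hsimp hge.1 (hfe ▸ hfg.1))⟩

lemma wellFounded_strictlyDescends [Finite X] (hbr : IsBroad r) (hsimp : Simple r) :
    WellFounded (StrictlyDescends r) :=
  have : IsTrans X (StrictlyDescends r) := ⟨fun _ _ _ => StrictlyDescends.trans hbr hsimp⟩
  have : Std.Irrefl (StrictlyDescends r) := ⟨fun _ h => h.2 rfl⟩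
  Finite.wellFounded_of_trans_of_irrefl _

lemma wellFounded_flip_strictlyDescends [Finite X] (hbr : IsBroad r) (hsimp : Simple r) :
    WellFounded (flip (StrictlyDescends r)) :=
  have : IsTrans X (flip (StrictlyDescends r)) :=
    ⟨fun _ _ _ h₁ h₂ => StrictlyDescends.trans hbr hsimp h₂ h₁⟩
  have : Std.Irrefl (flip (StrictlyDescends r)) := ⟨fun _ h => h.2 rfl⟩
  Finite.wellFounded_of_trans_of_irrefl _

lemma strictlyDescends_of_mem_upTuple (hpre : IsPreBroad r) (hsimp : Simple r) {e f : X}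
    {fs : Multiset X} (hu : upTuple r e fs) (hf : f ∈ fs) : StrictlyDescends r f e :=
  ⟨⟨fs, hu.1.1, hf⟩, by rintro rfl; exact hu.1.2 (eq_singleton_of_self_mem hpre hsimp hu.1.1 hf)⟩

lemma exists_mem_upTuple_descends {e z : X} {fs : Multiset X} (hu : upTuple r e fs)
    (hz : StrictlyDescends r z e) : ∃ f ∈ fs, descends r z f := by
  obtain ⟨⟨gs, hgs, hzgs⟩, hne⟩ := hz
  have hgs_ne : gs ≠ {e} := by
    rintro rfl
    exact hne (Multiset.mem_singleton.1 hzgs)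
  obtain ⟨p, rfl, rfl, hp⟩ := hu.2 gs hgs hgs_ne
  obtain ⟨b, hb, hzb⟩ := Multiset.mem_join.1 hzgs
  obtain ⟨q, hq, rfl⟩ := Multiset.mem_map.1 hb
  exact ⟨q.2, Multiset.mem_map_of_mem _ hq, q.1, hp q hq, hzb⟩

lemma eq_of_tupleLE (hbr : IsBroad r) (hsimp : Simple r) {as bs : Multiset X}
    (h : tupleLE r as bs) (hbs : bs.Nodup)
    (hanti : ∀ g ∈ bs, ∀ g' ∈ bs, descends r g g' → g = g')
    (hcover : ∀ g ∈ bs, ∃ a ∈ as, descends r g a) : as = bs := by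
  obtain ⟨p, rfl, rfl, hp⟩ := h
  -- each block `q.1 ≤ q.2` contains `q.2`, hence is the singleton `{q.2}`
  refine sum_map_fst_eq_map_snd fun q hq => ?_
  have hq₂ : q.2 ∈ p.map Prod.snd := Multiset.mem_map_of_mem _ hq
  obtain ⟨a, ha, hqa⟩ := hcover q.2 hq₂
  obtain ⟨b, hb, hab⟩ := Multiset.mem_join.1 ha
  obtain ⟨q', hq', rfl⟩ := Multiset.mem_map.1 hb
  have hq'₂ : q'.2 ∈ p.map Prod.snd := Multiset.mem_map_of_mem _ hq'
  have ha_le : descends r a q'.2 := ⟨q'.1, hp q' hq', hab⟩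
  have hsnd : q.2 = q'.2 := hanti _ hq₂ _ hq'₂ (descends_trans hbr.1 hqa ha_le)
  obtain rfl : q = q' := Multiset.inj_on_of_nodup_map hbs q hq q' hq' hsnd
  have haq : a = q.2 := descends_antisymm hbr hsimp ha_le hqa
  exact eq_singleton_of_self_mem hbr.1 hsimp (hp q hq) (haq ▸ hab)

end BroadPoset

section Forest

variable {r : Rel X}

lemma exists_upTuple_of_rel (hF : IsForest r) {gs : Multiset X} {e : X} (h : r gs e)
    (hne : gs ≠ {e}) : ∃ fs, upTuple r e fs ∧ tupleLE r gs fs := by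
  rcases hF.2.2.2.1 e with hleaf | ⟨fs, hfs⟩
  · exact absurd ⟨gs, h, hne⟩ hleaf
  · exact ⟨fs, hfs, hfs.2 gs h hne⟩

lemma exists_mem_upTuple_of_not_isMaxEl (hF : IsForest r) {x : X} (hx : ¬ IsMaxEl r x) :
    ∃ c ks, upTuple r c ks ∧ x ∈ ks := by
  have hbr : IsBroad r := hF.1
  have hsimp : Simple r := hF.2.2.1
  have := hF.2.1
  have hne : {s | StrictlyDescends r x s}.Nonempty := by
    simp only [IsMaxEl, not_forall] at hx
    obtain ⟨s, hxs, hsx⟩ := hx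
    exact ⟨s, hxs, Ne.symm hsx⟩
  -- a minimal strict ancestor of `x` is its parent
  obtain ⟨c, hxc, hmin⟩ := (wellFounded_strictlyDescends hbr hsimp).has_min _ hne
  obtain ⟨⟨gs, hgs, hxgs⟩, hxc_ne⟩ := hxc
  obtain ⟨ks, hks, -⟩ := exists_upTuple_of_rel hF hgs fun h =>
    hxc_ne (Multiset.mem_singleton.1 (h ▸ hxgs))
  obtain ⟨f, hf, hxf⟩ := exists_mem_upTuple_descends hks ⟨⟨gs, hgs, hxgs⟩, hxc_ne⟩
  refine ⟨c, ks, hks, ?_⟩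
  by_contra hx
  exact hmin f ⟨hxf, fun h => hx (h ▸ hf)⟩
    (strictlyDescends_of_mem_upTuple hbr.1 hsimp hks hf)

lemma broadHom_of_upTuple {r' : Rel Y} (hF' : IsForest r') (hpre : IsPreBroad r) {ψ : Y → X}
    (hup : ∀ w fs, upTuple r' w fs → r (fs.map ψ) (ψ w)) : BroadHom r' r ψ := by
  have hbr' : IsBroad r' := hF'.1
  have hsimp' : Simple r' := hF'.2.2.1
  have := hF'.2.1
  intro gs w
  induction w using (wellFounded_strictlyDescends hbr' hsimp').induction generalizing gs with
  | _ w ih =>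
  intro hgs
  by_cases hsingle : gs = {w}
  · simpa [hsingle] using hpre.1 (ψ w)
  obtain ⟨fs, hfs, hle⟩ := exists_upTuple_of_rel hF' hgs hsingle
  refine hpre.rel_of_tupleLE (hup w fs hfs) (hle.map fun bs f hf hbs => ?_)
  exact ih f (strictlyDescends_of_mem_upTuple hbr'.1 hsimp' hfs hf) bs hbs

end Forest

section ForestMap

variable {r : Rel X} {r' : Rel Y} {φ : X → Y}

lemma isMaxEl_map (hF : IsForest r) (hF' : IsForest r') (hφ : BroadHom r r' φ)
    (hsurj : Function.Surjective φ) (hind : Independent r r' φ) {x : X} (hx : IsMaxEl r x) :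
    IsMaxEl r' (φ x) := by
  obtain ⟨rs, rs', es, ⟨-, hrs⟩, ⟨hrs'_nodup, hrs'⟩, hle⟩ := hind
  have hroots : rs.map φ + es = rs' := by
    refine eq_of_tupleLE hF'.1 hF'.2.2.1 hle hrs'_nodup
      (fun g hg g' _ hgg' => ((hrs' g).1 hg g' hgg').symm) fun g _ => ?_
    obtain ⟨z, rfl⟩ := hsurj g
    obtain ⟨rt, hrt, hzrt⟩ := (hF.2.2.2.2 z).exists
    exact ⟨φ rt, Multiset.mem_add.2 (Or.inl (Multiset.mem_map_of_mem _ ((hrs rt).2 hrt))),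
      hφ.map_descends hzrt⟩
  exact (hrs' _).1
    (hroots ▸ Multiset.mem_add.2 (Or.inl (Multiset.mem_map_of_mem _ ((hrs x).2 hx))))

lemma descends_of_descends_map (hF : IsForest r) (hF' : IsForest r') (hφ : BroadHom r r' φ)
    (hinj : Function.Injective φ) (hsurj : Function.Surjective φ) (hind : Independent r r' φ)
    {z x : X} (h : descends r' (φ z) (φ x)) : descends r z x := by
  have := hF.2.1
  induction x using (wellFounded_flip_strictlyDescends hF.1 hF.2.2.1).induction with
  | _ x ih =>
  by_cases hx : IsMaxEl r x
  · obtain ⟨rt, hrt, hzrt⟩ := (hF.2.2.2.2 z).exists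
    have hrt_eq : φ rt = φ x := (hF'.2.2.2.2 (φ z)).unique
      ⟨isMaxEl_map hF hF' hφ hsurj hind hrt, hφ.map_descends hzrt⟩
      ⟨isMaxEl_map hF hF' hφ hsurj hind hx, h⟩
    exact hinj hrt_eq ▸ hzrt
  obtain ⟨c, ks, hks, hxks⟩ := exists_mem_upTuple_of_not_isMaxEl hF hx
  have hxc := strictlyDescends_of_mem_upTuple hF.1.1 hF.2.2.1 hks hxks
  have hzc : descends r z c := ih c hxc (descends_trans hF'.1.1 h (hφ.map_descends hxc.1))
  have hzc_ne : z ≠ c := by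
    rintro rfl
    exact hxc.2 (hinj (descends_antisymm hF'.1 hF'.2.2.1 (hφ.map_descends hxc.1) h))
  obtain ⟨f, hf, hzf⟩ := exists_mem_upTuple_descends hks ⟨hzc, hzc_ne⟩
  by_cases hfx : f = x
  · exact hfx ▸ hzf
  exact absurd h (not_descends_of_descends_of_mem hF'.1.1 hF'.2.2.1 (hφ _ _ hks.1.1)
    (Multiset.mem_map_of_mem φ hf) (Multiset.mem_map_of_mem φ hxks) (hinj.ne hfx)
    (hφ.map_descends hzf))

lemma exists_upTuple_map_eq (hF : IsForest r) (hF' : IsForest r') (hφ : BroadHom r r' φ)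
    (hinj : Function.Injective φ) (hsurj : Function.Surjective φ) (hind : Independent r r' φ)
    (hleaf : ∀ l, IsLeaf r l → ¬ r' 0 (φ l)) {x : X} {fs' : Multiset Y}
    (hu : upTuple r' (φ x) fs') : ∃ hs, upTuple r x hs ∧ hs.map φ = fs' := by
  have hbelow : ∀ g ∈ fs', ∃ z, φ z = g ∧ StrictlyDescends r z x := by
    intro g hg
    obtain ⟨z, rfl⟩ := hsurj g
    have hzx := strictlyDescends_of_mem_upTuple hF'.1.1 hF'.2.2.1 hu hg
    exact ⟨z, rfl, descends_of_descends_map hF hF' hφ hinj hsurj hind hzx.1,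
      fun h => hzx.2 (h ▸ rfl)⟩
  obtain ⟨hs, hhs⟩ : ∃ hs, upTuple r x hs := by
    refine (hF.2.2.2.1 x).resolve_left fun hx => ?_
    rcases Multiset.empty_or_exists_mem fs' with rfl | ⟨g, hg⟩
    · exact hleaf x hx hu.1.1
    · obtain ⟨z, -, ⟨gs, hgs, hzgs⟩, hzx⟩ := hbelow g hg
      exact hx ⟨gs, hgs, fun h => hzx (Multiset.mem_singleton.1 (h ▸ hzgs))⟩
  have hne : hs.map φ ≠ {φ x} := by
    intro h
    obtain ⟨a, rfl, ha⟩ := Multiset.map_eq_singleton.1 h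
    exact hhs.1.2 (by rw [hinj ha])
  refine ⟨hs, hhs, eq_of_tupleLE hF'.1 hF'.2.2.1 (hu.2 _ (hφ _ _ hhs.1.1) hne)
    (hF'.2.2.1 _ _ hu.1.1) (fun g hg g' hg' hgg' => ?_) fun g hg => ?_⟩
  · by_contra hgg'_ne
    exact not_descends_of_mem hF'.1.1 hF'.2.2.1 hu.1.1 hg hg' hgg'_ne hgg'
  · obtain ⟨z, rfl, hzx⟩ := hbelow g hg
    obtain ⟨a, ha, hza⟩ := exists_mem_upTuple_descends hhs hzx
    exact ⟨φ a, Multiset.mem_map_of_mem φ ha, hφ.map_descends hza⟩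

end ForestMap

/-- A map of forests that is both a face map (injective) and
a degeneracy (surjective, with `ε ≰ φ l` for every leaf `l`) is an
isomorphism of broad posets. -/
theorem stmt10 {X Y : Type u} (r : Rel X) (r' : Rel Y) (φ : X → Y)
    (hF : IsForest r) (hF' : IsForest r')
    (hhom : BroadHom r r' φ) (hind : Independent r r' φ)
    (hinj : Function.Injective φ)
    (hsurj : Function.Surjective φ)
    (hleaf : ∀ l, IsLeaf r l → ¬ r' 0 (φ l)) :
    ∃ ψ : Y → X, BroadHom r' r ψ ∧
      Function.LeftInverse ψ φ ∧ Function.RightInverse ψ φ := by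
  set ψ := Function.surjInv hsurj
  have hright : Function.RightInverse ψ φ := Function.rightInverse_surjInv hsurj
  have hleft : Function.LeftInverse ψ φ := Function.leftInverse_surjInv ⟨hinj, hsurj⟩
  refine ⟨ψ, broadHom_of_upTuple hF' hF.1.1 fun w fs' hu => ?_, hleft, hright⟩
  rw [← hright w] at hu
  obtain ⟨hs, hhs, rfl⟩ := exists_upTuple_map_eq hF hF' hhom hinj hsurj hind hleaf hu
  rw [Multiset.map_map, hleft.comp_eq_id, Multiset.map_id]
  exact hhs.1.1

end BroadPaper
end

section
/- Let S and T be simple broad posets. Define the tensor product S ⊗ T on the underlying set S × T, with broad relations generated by s̲ × t ≤ (s,t) for each relation s̲ ≤ s in S and t ∈ T, and s × t̲ ≤ (s,t) for each relation t̲ ≤ t in T and s ∈ S. Then S ⊗ T is a simple broad poset. Moreover, for any non-identity broad relation (s_1,t_1)⋯(s_n,t_n) ≤ (s,t) in S ⊗ T: (i) s_i ≤_d s and t_j ≤_d t for all i,j; (ii) for i ≠ j, either s_i s_j appears in some tuple ≤ s in S, or t_i t_j appears in some tuple ≤ t in T; (iii) if both s_i, s_j and t_i, t_j are ≤_d-comparable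 pairs then i = j. -/
universe u

/-!
A relation of `S ⊗ T` is built from generators by broad transitivity, so it suffices to see that
two properties of a relation `xs ≤ z` survive it: every letter of `xs` lies coordinatewise below
`z` in the descendant orders, and any two positions of `xs` have first coordinates appearing
together in a tuple `≤ z.1` of `S`, or second coordinates appearing together in a tuple `≤ z.2`
of `T`. The second property survives because substituting tuples for two letters of a tuple
turns any descendants of those letters into letters of one tuple. In a simple broad poset two
letters appearing together can be neither equal nor `≤_d`-comparable (a common descendant would
occur twice), which gives simplicity of `S ⊗ T` and (iii); antisymmetry of `S ⊗ T` reduces to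
antisymmetry of `≤_d` in `S` and `T`.
-/

namespace BroadPaper

section Multiset

variable {α β γ : Type*}

lemma exists_cons_cons_of_map_eq {f : α → β} {s : Multiset α} {b b' : β} {t : Multiset β}
    (h : s.map f = b ::ₘ b' ::ₘ t) :
    ∃ a a' s', s = a ::ₘ a' ::ₘ s' ∧ f a = b ∧ f a' = b' := by
  classical
  obtain ⟨a, ha, rfl, h'⟩ := (Multiset.map_eq_cons f s _ b).2 h
  obtain ⟨a', ha', rfl, -⟩ := (Multiset.map_eq_cons f _ _ _).2 h'
  exact ⟨a, a', _, by rw [Multiset.cons_erase ha', Multiset.cons_erase ha], rfl, rfl⟩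

lemma sum_map_eq_cons_cons {f : γ → Multiset α} {p : Multiset γ} {x y : α}
    {rest : Multiset α} (h : (p.map f).sum = x ::ₘ y ::ₘ rest) :
    (∃ q ∈ p, ∃ m, f q = x ::ₘ y ::ₘ m) ∨
      ∃ q q' p', p = q ::ₘ q' ::ₘ p' ∧ x ∈ f q ∧ y ∈ f q' := by
  have hx : x ∈ (p.map f).sum := h ▸ Multiset.mem_cons_self x _
  obtain ⟨q, hq, hxq⟩ : ∃ q ∈ p, x ∈ f q := by simpa using Multiset.mem_join.1 hx
  obtain ⟨p', rfl⟩ := Multiset.exists_cons_of_mem hq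
  obtain ⟨m, hm⟩ := Multiset.exists_cons_of_mem hxq
  rw [Multiset.map_cons, Multiset.sum_cons, hm, Multiset.cons_add, Multiset.cons_inj_right] at h
  have hy : y ∈ m + (p'.map f).sum := h ▸ Multiset.mem_cons_self y _
  rcases Multiset.mem_add.1 hy with hym | hyp
  · obtain ⟨m', rfl⟩ := Multiset.exists_cons_of_mem hym
    exact Or.inl ⟨q, hq, m', hm⟩
  · obtain ⟨q', hq', hyq'⟩ : ∃ q' ∈ p', y ∈ f q' := by
      simpa using Multiset.mem_join.1 hyp
    obtain ⟨p'', rfl⟩ := Multiset.exists_cons_of_mem hq'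
    exact Or.inr ⟨q, q', p'', rfl, hxq, hyq'⟩

end Multiset

section PreBroad

variable {X : Type u} {r : Rel X} {a b e f z z' : X}

def JointlyBelow (r : Rel X) (a b e : X) : Prop := ∃ ms, r (a ::ₘ b ::ₘ ms) e

lemma descends_iff_exists_cons : descends r z e ↔ ∃ ms, r (z ::ₘ ms) e := by
  constructor
  · rintro ⟨fs, h, hz⟩
    obtain ⟨ms, rfl⟩ := Multiset.exists_cons_of_mem hz
    exact ⟨ms, h⟩
  · rintro ⟨ms, h⟩
    exact ⟨_, h, Multiset.mem_cons_self z ms⟩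

lemma IsPreBroad.subst (hr : IsPreBroad r) {ms us : Multiset X}
    (h : r (a ::ₘ ms) e) (hu : r us a) : r (us + ms) e := by
  have key := hr.2 ((us, a) ::ₘ ms.map fun z => ({z}, z)) e
    (by simpa [Multiset.map_map, Function.comp_def] using h)
    (by simpa using ⟨hu, fun z _ => hr.1 z⟩)
  simpa [Multiset.map_map, Function.comp_def, Multiset.sum_map_singleton] using key

lemma descends_refl (hr : IsPreBroad r) (e : X) : descends r e e :=
  ⟨{e}, hr.1 e, Multiset.mem_singleton_self e⟩

lemma descends_trans_s12 (hr : IsPreBroad r) (hza : descends r z a) (hae : descends r a e) :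
    descends r z e := by
  obtain ⟨us, hu⟩ := descends_iff_exists_cons.1 hza
  obtain ⟨vs, hv⟩ := descends_iff_exists_cons.1 hae
  exact descends_iff_exists_cons.2 ⟨us + vs, by simpa using hr.subst hv hu⟩

lemma JointlyBelow.trans_descends (h : JointlyBelow r a b e) (hr : IsPreBroad r)
    (he : descends r e f) : JointlyBelow r a b f := by
  obtain ⟨ms, h⟩ := h
  obtain ⟨vs, hv⟩ := descends_iff_exists_cons.1 he
  exact ⟨ms + vs, by simpa using hr.subst hv h⟩

lemma JointlyBelow.of_descends (h : JointlyBelow r a b e) (hr : IsPreBroad r)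
    (hz : descends r z a) (hz' : descends r z' b) : JointlyBelow r z z' e := by
  obtain ⟨ms, h⟩ := h
  obtain ⟨us, hu⟩ := descends_iff_exists_cons.1 hz
  obtain ⟨vs, hv⟩ := descends_iff_exists_cons.1 hz'
  have hza : r (b ::ₘ (z ::ₘ us + ms)) e := by simpa using hr.subst h hu
  refine ⟨vs + us + ms, ?_⟩
  simpa [Multiset.cons_swap z' z, add_assoc] using hr.subst hza hv

lemma JointlyBelow.ne (h : JointlyBelow r a b e) (hs : Simple r) : a ≠ b := by
  rintro rfl
  obtain ⟨ms, h⟩ := h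
  simpa using hs _ _ h

lemma JointlyBelow.not_comparable (h : JointlyBelow r a b e) (hr : IsPreBroad r)
    (hs : Simple r) : ¬ Comparable r a b := by
  rintro (hab | hba)
  · exact (h.of_descends hr (descends_refl hr a) hab).ne hs rfl
  · exact (h.of_descends hr hba (descends_refl hr b)).ne hs rfl

lemma eq_singleton_of_mem (hr : IsPreBroad r) (hs : Simple r) {W : Multiset X}
    (h : r W a) (ha : a ∈ W) : W = {a} := by
  obtain ⟨W', rfl⟩ := Multiset.exists_cons_of_mem ha
  -- substituting `a ::ₘ W'` for its own letter `a` repeats every letter of `W'`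
  have hdisj := (Multiset.nodup_add.1 (hs _ _ (hr.subst h h))).2.2
  have : W' = 0 := disjoint_self.1 (hdisj.mono_left (Multiset.le_cons_self W' a))
  rw [this, Multiset.cons_zero]

lemma descends_antisymm_s12 (hr : IsBroad r) (hs : Simple r) (hab : descends r a b)
    (hba : descends r b a) : a = b := by
  obtain ⟨us, hu⟩ := descends_iff_exists_cons.1 hab
  obtain ⟨vs, hv⟩ := descends_iff_exists_cons.1 hba
  have hW := eq_singleton_of_mem hr.1 hs (hr.1.subst hv hu) (by simp)
  rw [Multiset.cons_add, ← Multiset.cons_zero, Multiset.cons_inj_right, add_eq_zero] at hW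
  obtain ⟨rfl, rfl⟩ := hW
  exact hr.2 a b hu hv

end PreBroad

section Tensor

variable {A B : Type u} {rS : Rel A} {rT : Rel B}

lemma tensorRel_isPreBroad : IsPreBroad (tensorRel rS rT) := ⟨GenRel.refl, GenRel.btrans⟩

lemma descends_of_descends_tensorRel (hS : IsPreBroad rS) (hT : IsPreBroad rT) {x z : A × B}
    (h : descends (tensorRel rS rT) x z) : descends rS x.1 z.1 ∧ descends rT x.2 z.2 := by
  obtain ⟨xs, h, hx⟩ := h
  induction h generalizing x with
  | of xs z hgen =>
    rcases hgen with ⟨as, has, rfl⟩ | ⟨bs, hbs, rfl⟩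
    · obtain ⟨a, ha, rfl⟩ := Multiset.mem_map.1 hx
      exact ⟨⟨as, has, ha⟩, descends_refl hT _⟩
    · obtain ⟨b, hb, rfl⟩ := Multiset.mem_map.1 hx
      exact ⟨descends_refl hS _, ⟨bs, hbs, hb⟩⟩
  | refl z =>
    rw [Multiset.mem_singleton.1 hx]
    exact ⟨descends_refl hS _, descends_refl hT _⟩
  | btrans p z _ _ ihout ihin =>
    obtain ⟨q, hq, hxq⟩ : ∃ q ∈ p, x ∈ q.1 := by simpa using Multiset.mem_join.1 hx
    have hin := ihin q hq hxq
    have hout := ihout (Multiset.mem_map_of_mem Prod.snd hq)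
    exact ⟨descends_trans_s12 hS hin.1 hout.1, descends_trans_s12 hT hin.2 hout.2⟩

lemma jointlyBelow_of_tensorRel (hS : IsPreBroad rS) (hT : IsPreBroad rT)
    {xs : Multiset (A × B)} {z : A × B} (h : tensorRel rS rT xs z) :
    ∀ x y rest, xs = x ::ₘ y ::ₘ rest →
      JointlyBelow rS x.1 y.1 z.1 ∨ JointlyBelow rT x.2 y.2 z.2 := by
  induction h with
  | of xs z hgen =>
    intro x y rest hxs
    rcases hgen with ⟨as, has, rfl⟩ | ⟨bs, hbs, rfl⟩
    · obtain ⟨a, a', as', rfl, rfl, rfl⟩ := exists_cons_cons_of_map_eq hxs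
      exact Or.inl ⟨as', has⟩
    · obtain ⟨b, b', bs', rfl, rfl, rfl⟩ := exists_cons_cons_of_map_eq hxs
      exact Or.inr ⟨bs', hbs⟩
  | refl z =>
    intro x y rest hxs
    simpa using congrArg Multiset.card hxs
  | btrans p z hout hin ihout ihin =>
    intro x y rest hxs
    rcases sum_map_eq_cons_cons hxs with ⟨q, hq, m, hqm⟩ | ⟨q, q', p', rfl, hxq, hyq'⟩
    · have hqz := descends_of_descends_tensorRel hS hT
        ⟨_, hout, Multiset.mem_map_of_mem Prod.snd hq⟩
      exact (ihin q hq x y m hqm).imp (·.trans_descends hS hqz.1) (·.trans_descends hT hqz.2)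
    · have hx := descends_of_descends_tensorRel hS hT ⟨_, hin q (by simp), hxq⟩
      have hy := descends_of_descends_tensorRel hS hT ⟨_, hin q' (by simp), hyq'⟩
      exact (ihout q.2 q'.2 (p'.map Prod.snd) (by simp)).imp
        (·.of_descends hS hx.1 hy.1) (·.of_descends hT hx.2 hy.2)

end Tensor

/-- The tensor product of simple broad posets is a simple
broad poset, and any non-identity relation
`(s₁,t₁) ⋯ (sₙ,tₙ) ≤ (s,t)` satisfies: (i) `sᵢ ≤_d s` and `tⱼ ≤_d t`;
(ii) for distinct positions, either `sᵢ sⱼ` appears in a tuple `≤ s` or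
`tᵢ tⱼ` appears in a tuple `≤ t`; (iii) no two distinct positions have both
coordinates `≤_d`-comparable. -/
theorem stmt12 {A B : Type u} (rS : Rel A) (rT : Rel B)
    (hS : IsBroad rS) (hsS : Simple rS) (hT : IsBroad rT) (hsT : Simple rT) :
    IsBroad (tensorRel rS rT) ∧ Simple (tensorRel rS rT) ∧
    (∀ (xs : Multiset (A × B)) (s : A) (t : B),
      tensorRel rS rT xs (s, t) → xs ≠ ({(s, t)} : Multiset (A × B)) →
      ((∀ x ∈ xs, descends rS x.1 s ∧ descends rT x.2 t) ∧
       (∀ (x y : A × B) (rest : Multiset (A × B)), xs = x ::ₘ y ::ₘ rest →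
         (∃ ss, rS (x.1 ::ₘ y.1 ::ₘ ss) s) ∨
         (∃ ts, rT (x.2 ::ₘ y.2 ::ₘ ts) t)) ∧
       (∀ (x y : A × B) (rest : Multiset (A × B)), xs = x ::ₘ y ::ₘ rest →
         ¬ (Comparable rS x.1 y.1 ∧ Comparable rT x.2 y.2)))) := by
  have desc := @descends_of_descends_tensorRel A B rS rT hS.1 hT.1
  have joint := @jointlyBelow_of_tensorRel A B rS rT hS.1 hT.1
  refine ⟨⟨tensorRel_isPreBroad, fun e f hef hfe => ?_⟩, fun xs z h => ?_,
    fun xs s t h _ => ⟨fun x hx => desc ⟨xs, h, hx⟩, joint h, fun x y rest hxs => ?_⟩⟩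
  · have hle := desc ⟨_, hef, Multiset.mem_singleton_self e⟩
    have hge := desc ⟨_, hfe, Multiset.mem_singleton_self f⟩
    exact Prod.ext (descends_antisymm_s12 hS hsS hle.1 hge.1) (descends_antisymm_s12 hT hsT hle.2 hge.2)
  · refine Multiset.nodup_iff_le.2 fun x hle => ?_
    obtain ⟨rest, hrest⟩ := Multiset.le_iff_exists_add.1 hle
    rcases joint h x x rest (by simpa using hrest) with hj | hj
    exacts [hj.ne hsS rfl, hj.ne hsT rfl]
  · rintro ⟨hcS, hcT⟩
    rcases joint h x y rest hxs with hj | hj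
    exacts [hj.not_comparable hS.1 hsS hcS, hj.not_comparable hT.1 hsT hcT]

end BroadPaper
end
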